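/- arXiv:0912.1479 — 2 statements merged into one kernel-verified Lean document; each statement's English description precedes it below -/
import Mathlib

section
/- Let S : ℝ^d → [0,∞) be integrable with S(u)(1+‖u‖^r) ≥ C for almost every u, for some C > 0 and r ∈ ℕ, and let k(x,y) = ∫_{ℝ^d} cos(⟨u, x−y⟩) S(u) du. Let (x_n)_{n≥1} be a sequence in ℝ^d, let x ∈ ℝ^d be in the closure of {x_n : n ≥ 1}, and for each n let λ⁽ⁿ⁾ ∈ ℝⁿ be a minimizer of the quadratic form Qₙ(λ) = k(x,x) − 2 Σᵢ λᵢ k(x,xᵢ) + Σᵢⱼ λᵢλⱼ k(xᵢ,xⱼ). Then for every Schwartz function f ∈ 𝒮(ℝ^d), Σᵢ₌₁ⁿ λ⁽ⁿ⁾ᵢ f(xᵢ) → f(x) as n → ∞. -/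
open MeasureTheory Filter
open scoped RealInnerProductSpace

/-- The quadratic form `Qₙ(λ)`. -/
noncomputable def krigQ {d : ℕ}
    (k : EuclideanSpace ℝ (Fin d) → EuclideanSpace ℝ (Fin d) → ℝ)
    (x : EuclideanSpace ℝ (Fin d)) {n : ℕ}
    (pts : Fin n → EuclideanSpace ℝ (Fin d)) (lam : Fin n → ℝ) : ℝ :=
  k x x - 2 * ∑ i, lam i * k x (pts i)
    + ∑ i, ∑ j, lam i * lam j * k (pts i) (pts j)

/-!
Bochner's representation of the kernel turns `Qₙ(a)` into the `S`-weighted `L²` norm of the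
trigonometric polynomial `gₐ(u) = ∑ᵢ aᵢ e^{i⟨u,xᵢ⟩} - e^{i⟨u,x⟩}`. The kriging variance
`Qₙ(λ⁽ⁿ⁾)` tends to `0`, since it is at most `Qₙ(eⱼ) = k(x,x) - 2k(x,xⱼ) + k(xⱼ,xⱼ)` for every
`j < n`, and design points come arbitrarily close to `x`. Writing `f(y) = ∫ φ(v) e^{i⟨v,y⟩} dv`
with `φ` a rescaled Fourier transform of `f`, the prediction error is `∫ φ g_{λ⁽ⁿ⁾}`; weighted
AM-GM together with `S(v)(1 + ‖v‖^r) ≥ C` bounds it by `t ∫ |φ|²(1 + ‖v‖^r) + Qₙ(λ⁽ⁿ⁾)/(4tC)`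
for every `t > 0`.
-/

open Complex SchwartzMap
open scoped ComplexConjugate FourierTransform Topology

section SpectralKernel

variable {E : Type*} [NormedAddCommGroup E] [InnerProductSpace ℝ E] {ι : Type*} [Fintype ι]

noncomputable def trigPoly (c : ι → ℝ) (p : ι → E) (u : E) : ℂ :=
  ∑ i, (c i : ℂ) * exp (⟪u, p i⟫ * I)

theorem norm_trigPoly_sq (c : ι → ℝ) (p : ι → E) (u : E) :
    ‖trigPoly c p u‖ ^ 2 = ∑ i, ∑ j, c i * c j * Real.cos ⟪u, p i - p j⟫ := by
  have hij : ∀ i j, (conj ((c i : ℂ) * exp (⟪u, p i⟫ * I)) * ((c j : ℂ) * exp (⟪u, p j⟫ * I))).re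
      = c i * c j * Real.cos ⟪u, p i - p j⟫ := by
    intro i j
    rw [map_mul, conj_ofReal, ← exp_conj, map_mul, conj_ofReal, conj_I, mul_mul_mul_comm,
      ← exp_add, show (⟪u, p i⟫ : ℂ) * -I + ⟪u, p j⟫ * I = ((⟪u, p j - p i⟫ : ℝ) : ℂ) * I by
        push_cast [inner_sub_right]; ring,
      ← ofReal_mul, re_ofReal_mul, exp_ofReal_mul_I_re, ← Real.cos_neg, ← inner_neg_right, neg_sub]
  rw [← ofReal_re (‖_‖ ^ 2), ofReal_pow, ← conj_mul', trigPoly, map_sum, Finset.sum_mul_sum, re_sum]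
  simp only [re_sum, hij]

variable [MeasurableSpace E] [OpensMeasurableSpace E] {μ : Measure E} {S : E → ℝ}

theorem integrable_cos_inner_mul (hS : Integrable S μ) (h : E) :
    Integrable (fun u => Real.cos ⟪u, h⟫ * S u) μ :=
  hS.bdd_mul (by fun_prop) (Eventually.of_forall fun _ => by simpa using Real.abs_cos_le_one _)

theorem continuous_integral_cos_inner_mul (hS : Integrable S μ) :
    Continuous fun h : E => ∫ u, Real.cos ⟪u, h⟫ * S u ∂μ :=
  continuous_of_dominated (fun h => (integrable_cos_inner_mul hS h).aestronglyMeasurable)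
    (fun _ => Eventually.of_forall fun _ => by
      simpa [abs_mul] using mul_le_of_le_one_left (abs_nonneg _) (Real.abs_cos_le_one _))
    hS.norm (Eventually.of_forall fun _ => by fun_prop)

theorem integrable_norm_trigPoly_sq_mul (hS : Integrable S μ) (c : ι → ℝ) (p : ι → E) :
    Integrable (fun u => ‖trigPoly c p u‖ ^ 2 * S u) μ := by
  simp_rw [norm_trigPoly_sq, Finset.sum_mul, mul_assoc]
  exact integrable_finsetSum _ fun i _ => integrable_finsetSum _ fun j _ =>
    ((integrable_cos_inner_mul hS _).const_mul _).const_mul _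

theorem integral_norm_trigPoly_sq_mul (hS : Integrable S μ) (c : ι → ℝ) (p : ι → E) :
    ∫ u, ‖trigPoly c p u‖ ^ 2 * S u ∂μ
      = ∑ i, ∑ j, c i * c j * ∫ u, Real.cos ⟪u, p i - p j⟫ * S u ∂μ := by
  simp_rw [norm_trigPoly_sq, Finset.sum_mul, mul_assoc]
  rw [integral_finsetSum _ fun i _ => integrable_finsetSum _ fun j _ =>
    ((integrable_cos_inner_mul hS _).const_mul _).const_mul _]
  refine Finset.sum_congr rfl fun i _ => ?_
  rw [integral_finsetSum _ fun j _ => ((integrable_cos_inner_mul hS _).const_mul _).const_mul _]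
  simp_rw [integral_const_mul]

end SpectralKernel

section Kriging

variable {d : ℕ} {k : EuclideanSpace ℝ (Fin d) → EuclideanSpace ℝ (Fin d) → ℝ}
  {x : EuclideanSpace ℝ (Fin d)}

theorem krigQ_single {n : ℕ} (pts : Fin n → EuclideanSpace ℝ (Fin d)) (j : Fin n) :
    krigQ k x pts (Pi.single j 1) = k x x - 2 * k x (pts j) + k (pts j) (pts j) := by
  simp [krigQ, Pi.single_apply]

theorem tendsto_krigQ_zero (xs : ℕ → EuclideanSpace ℝ (Fin d)) (hx : x ∈ closure (Set.range xs))
    (hk : ContinuousAt (fun y => k x x - 2 * k x y + k y y) x) (lam : (n : ℕ) → Fin n → ℝ)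
    (hlam : ∀ (n : ℕ) (mu : Fin n → ℝ),
      krigQ k x (fun i : Fin n => xs i) (lam n) ≤ krigQ k x (fun i : Fin n => xs i) mu)
    (hQ : ∀ n, 0 ≤ krigQ k x (fun i : Fin n => xs i) (lam n)) :
    Tendsto (fun n => krigQ k x (fun i : Fin n => xs i) (lam n)) atTop (𝓝 0) := by
  refine tendsto_order.2 ⟨fun a ha => Eventually.of_forall fun n => ha.trans_le (hQ n),
    fun ε hε => ?_⟩
  have hx0 : k x x - 2 * k x x + k x x < ε := by linarith
  obtain ⟨_, hj, j, rfl⟩ := mem_closure_iff_nhds.1 hx _ (hk.eventually (gt_mem_nhds hx0))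
  filter_upwards [eventually_gt_atTop j] with n hn
  calc krigQ k x (fun i : Fin n => xs i) (lam n)
      ≤ krigQ k x (fun i : Fin n => xs i) (Pi.single ⟨j, hn⟩ 1) := hlam n _
    _ < ε := by rw [krigQ_single]; exact hj

-- The target `x` enters as an extra point, indexed by `none`, with coefficient `-1`.
theorem krigQ_eq_integral {μ : Measure (EuclideanSpace ℝ (Fin d))}
    {S : EuclideanSpace ℝ (Fin d) → ℝ} (hS : Integrable S μ)
    (hk : ∀ y z, k y z = ∫ u, Real.cos ⟪u, y - z⟫ * S u ∂μ) {n : ℕ}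
    (pts : Fin n → EuclideanSpace ℝ (Fin d)) (a : Fin n → ℝ) :
    krigQ k x pts a =
      ∫ u, ‖trigPoly (fun o : Option (Fin n) => o.elim (-1) a) (fun o => o.elim x pts) u‖ ^ 2
        * S u ∂μ := by
  have hsymm : ∀ y z, k z y = k y z := fun y z => by
    simp_rw [hk, ← neg_sub y, inner_neg_right, Real.cos_neg]
  rw [integral_norm_trigPoly_sq_mul hS]
  simp only [← hk, Fintype.sum_option, Option.elim, krigQ, hsymm x, Finset.sum_add_distrib,
    mul_neg_one, neg_mul, one_mul, Finset.sum_neg_distrib]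
  ring

end Kriging

section FourierRepresentation

variable {V : Type*} [NormedAddCommGroup V] [InnerProductSpace ℝ V] [FiniteDimensional ℝ V]
  [MeasurableSpace V] [BorelSpace V]

theorem SchwartzMap.exists_integral_mul_exp_inner_eq (g : 𝓢(V, ℂ)) :
    ∃ φ : 𝓢(V, ℂ), ∀ y, ∫ v, φ v * exp (⟪v, y⟫ * I) = g y := by
  have h2π : 2 * Real.pi ≠ 0 := by positivity
  -- inverting the Fourier transform of `v ↦ g (2π v)` removes the `2π` from the exponent
  set g₂ := compCLMOfContinuousLinearEquiv ℂ
    (ContinuousLinearEquiv.smulLeft (R₁ := ℝ) (M₁ := V) (Units.mk0 (2 * Real.pi) h2π)) g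
  refine ⟨𝓕 g₂, fun y => ?_⟩
  have h := congr($(FourierTransform.fourierInv_fourier_eq (F := 𝓢(V, ℂ)) g₂)
    ((2 * Real.pi)⁻¹ • y))
  rw [fourierInv_coe, Real.fourierInv_eq'] at h
  simp only [g₂, compCLMOfContinuousLinearEquiv_apply, Function.comp_apply,
    ContinuousLinearEquiv.smulLeft_apply_apply, Units.smul_mk0, smul_inv_smul₀ h2π,
    real_inner_smul_right, mul_inv_cancel_left₀ h2π, smul_eq_mul] at h
  rw [← h]
  exact integral_congr_ae (Eventually.of_forall fun v => mul_comm _ _)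

theorem SchwartzMap.integrable_norm_sq_mul_one_add_pow (φ : 𝓢(V, ℂ)) (r : ℕ) :
    Integrable (fun v => ‖φ v‖ ^ 2 * (1 + ‖v‖ ^ r)) := by
  refine ((φ.integrable.norm.add (φ.integrable_pow_mul volume r)).const_mul
    (SchwartzMap.seminorm ℝ 0 0 φ)).mono' (by fun_prop) (Eventually.of_forall fun v => ?_)
  have hφ := φ.norm_le_seminorm ℝ v
  rw [Real.norm_of_nonneg (by positivity)]
  calc ‖φ v‖ ^ 2 * (1 + ‖v‖ ^ r) = ‖φ v‖ * (‖φ v‖ + ‖v‖ ^ r * ‖φ v‖) := by ring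
    _ ≤ _ := by simp only [Pi.add_apply]; gcongr

end FourierRepresentation

section Stability

theorem mul_le_weighted_sq_add_sq {p q w s C t : ℝ} (ht : 0 < t) (hw : 0 < w) (hC : 0 < C)
    (h : C ≤ s * w) : p * q ≤ t * (p ^ 2 * w) + q ^ 2 * s / (4 * t * C) := by
  have hyoung : p * q ≤ t * (p ^ 2 * w) + q ^ 2 / (4 * t * w) := by
    have : t * (p ^ 2 * w) + q ^ 2 / (4 * t * w) - p * q
        = (2 * t * w * p - q) ^ 2 / (4 * t * w) := by
      field_simp; ring
    nlinarith [show 0 ≤ (2 * t * w * p - q) ^ 2 / (4 * t * w) by positivity]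
  have hweight : q ^ 2 / (4 * t * w) ≤ q ^ 2 * s / (4 * t * C) := by
    rw [div_le_div_iff₀ (by positivity) (by positivity)]
    nlinarith [mul_le_mul_of_nonneg_left h (by positivity : 0 ≤ q ^ 2 * (4 * t))]
  linarith

theorem integral_mul_le_of_le_mul {α : Type*} [MeasurableSpace α] {μ : Measure α}
    {P G w S : α → ℝ} {C t : ℝ} (ht : 0 < t) (hC : 0 < C) (hw : ∀ v, 0 < w v)
    (hlow : ∀ᵐ v ∂μ, C ≤ S v * w v) (hP0 : ∀ v, 0 ≤ P v) (hG0 : ∀ v, 0 ≤ G v)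
    (hP : Integrable (fun v => P v ^ 2 * w v) μ) (hG : Integrable (fun v => G v ^ 2 * S v) μ) :
    ∫ v, P v * G v ∂μ ≤ t * ∫ v, P v ^ 2 * w v ∂μ + (∫ v, G v ^ 2 * S v ∂μ) / (4 * t * C) :=
  calc ∫ v, P v * G v ∂μ ≤ ∫ v, t * (P v ^ 2 * w v) + G v ^ 2 * S v / (4 * t * C) ∂μ :=
        integral_mono_of_nonneg (Eventually.of_forall fun v => mul_nonneg (hP0 v) (hG0 v))
          ((hP.const_mul t).add (hG.div_const _))
          (hlow.mono fun v hv => mul_le_weighted_sq_add_sq ht (hw v) hC hv)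
    _ = _ := by
        rw [integral_add (hP.const_mul t) (hG.div_const _), integral_const_mul, integral_div]

variable {V : Type*} [NormedAddCommGroup V] [InnerProductSpace ℝ V] [MeasurableSpace V]
  [OpensMeasurableSpace V] {μ : Measure V} {ι : Type*} [Fintype ι]

theorem sum_mul_eq_integral_mul_trigPoly {φ g : V → ℂ} (hφ : Integrable φ μ)
    (hg : ∀ y, ∫ v, φ v * exp (⟪v, y⟫ * I) ∂μ = g y) (c : ι → ℝ) (p : ι → V) :
    ∑ i, (c i : ℂ) * g (p i) = ∫ v, φ v * trigPoly c p v ∂μ := by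
  have hint : ∀ i, Integrable (fun v => φ v * ((c i : ℂ) * exp (⟪v, p i⟫ * I))) μ := fun i =>
    hφ.mul_bdd (c := |c i|) (by fun_prop)
      (Eventually.of_forall fun v => by simp [norm_exp_ofReal_mul_I])
  simp_rw [← hg, ← integral_const_mul, trigPoly, Finset.mul_sum]
  rw [integral_finsetSum _ fun i _ => hint i]
  exact Finset.sum_congr rfl fun i _ => integral_congr_ae (Eventually.of_forall fun v => by ring)

theorem norm_sum_mul_le {φ g : V → ℂ} {S w : V → ℝ} {C t : ℝ} (hφ : Integrable φ μ)
    (hg : ∀ y, ∫ v, φ v * exp (⟪v, y⟫ * I) ∂μ = g y)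
    (hφw : Integrable (fun v => ‖φ v‖ ^ 2 * w v) μ) (hS : Integrable S μ) (hw : ∀ v, 0 < w v)
    (hC : 0 < C) (hlow : ∀ᵐ v ∂μ, C ≤ S v * w v) (ht : 0 < t) (c : ι → ℝ) (p : ι → V) :
    ‖∑ i, (c i : ℂ) * g (p i)‖ ≤ t * ∫ v, ‖φ v‖ ^ 2 * w v ∂μ
      + (∫ v, ‖trigPoly c p v‖ ^ 2 * S v ∂μ) / (4 * t * C) :=
  calc ‖∑ i, (c i : ℂ) * g (p i)‖ = ‖∫ v, φ v * trigPoly c p v ∂μ‖ := by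
        rw [sum_mul_eq_integral_mul_trigPoly hφ hg]
    _ ≤ ∫ v, ‖φ v‖ * ‖trigPoly c p v‖ ∂μ :=
        (norm_integral_le_integral_norm _).trans_eq (by simp_rw [norm_mul])
    _ ≤ _ := integral_mul_le_of_le_mul ht hC hw hlow (fun _ => norm_nonneg _)
        (fun _ => norm_nonneg _) hφw (integrable_norm_trigPoly_sq_mul hS c p)

end Stability

theorem tendsto_zero_of_forall_abs_le_mul_add_div {α : Type*} {l : Filter α} {e b : α → ℝ}
    {A : ℝ} (hb : Tendsto b l (𝓝 0)) (h : ∀ t > 0, ∀ n, |e n| ≤ t * A + b n / t) :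
    Tendsto e l (𝓝 0) := by
  refine Metric.tendsto_nhds.2 fun ε hε => ?_
  set t := ε / (2 * (|A| + 1))
  have ht : 0 < t := by positivity
  have htA : t * A ≤ ε / 2 - t := by
    have : t * (|A| + 1) = ε / 2 := by simp only [t]; field_simp
    nlinarith [le_abs_self A]
  filter_upwards [Metric.tendsto_nhds.1 hb (t * t) (by positivity)] with n hn
  rw [Real.dist_eq, sub_zero] at hn ⊢
  have hbt : b n / t < t := by rw [div_lt_iff₀ ht]; linarith [le_abs_self (b n)]
  linarith [h t ht n]

/-- Under the polynomial-growth spectral condition, if `x` is adherent to the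
sequence of design points and `λ⁽ⁿ⁾` are kriging coefficients (minimizers of `Qₙ`),
then the kriging predictions of any Schwartz function `f` converge: `Σᵢ λ⁽ⁿ⁾ᵢ f(xᵢ) → f(x)`. -/
theorem schwartz_pointwise_consistency {d : ℕ}
    (S : EuclideanSpace ℝ (Fin d) → ℝ)
    (hS_nonneg : ∀ u, 0 ≤ S u) (hS_int : Integrable S)
    (C : ℝ) (hC : 0 < C) (r : ℕ)
    (hS_low : ∀ᵐ u : EuclideanSpace ℝ (Fin d), C ≤ S u * (1 + ‖u‖ ^ r))
    (k : EuclideanSpace ℝ (Fin d) → EuclideanSpace ℝ (Fin d) → ℝ)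
    (hk : ∀ x y, k x y = ∫ u, Real.cos ⟪u, x - y⟫ * S u)
    (xs : ℕ → EuclideanSpace ℝ (Fin d)) (x : EuclideanSpace ℝ (Fin d))
    (hx : x ∈ closure (Set.range xs))
    (lam : (n : ℕ) → Fin n → ℝ)
    (hlam : ∀ (n : ℕ) (mu : Fin n → ℝ),
      krigQ k x (fun i : Fin n => xs i) (lam n) ≤ krigQ k x (fun i : Fin n => xs i) mu)
    (f : SchwartzMap (EuclideanSpace ℝ (Fin d)) ℝ) :
    Tendsto (fun n : ℕ => ∑ i : Fin n, lam n i * f (xs i)) atTop (nhds (f x)) := by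
  obtain ⟨φ, hφ⟩ := (postcompCLM (𝕜 := ℝ) ofRealCLM f).exists_integral_mul_exp_inner_eq
  have hQ_eq n := krigQ_eq_integral (x := x) hS_int hk (fun i : Fin n => xs i) (lam n)
  have hcont : Continuous fun y => k x x - 2 * k x y + k y y := by
    have hF := continuous_integral_cos_inner_mul hS_int (μ := volume)
    simp only [hk]
    exact (continuous_const.sub (continuous_const.mul (hF.comp (continuous_const.sub
      continuous_id)))).add (hF.comp (continuous_id.sub continuous_id))
  have hQ := tendsto_krigQ_zero xs hx hcont.continuousAt lam hlam fun n =>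
    (hQ_eq n).symm ▸ integral_nonneg fun u => mul_nonneg (sq_nonneg _) (hS_nonneg u)
  refine tendsto_sub_nhds_zero_iff.1 (tendsto_zero_of_forall_abs_le_mul_add_div
    (A := ∫ v, ‖φ v‖ ^ 2 * (1 + ‖v‖ ^ r)) (zero_div (4 * C) ▸ hQ.div_const (4 * C))
    fun t ht n => ?_)
  have hbound := norm_sum_mul_le φ.integrable hφ (φ.integrable_norm_sq_mul_one_add_pow r)
    hS_int (fun v => by positivity) hC hS_low ht (fun o : Option (Fin n) => o.elim (-1) (lam n))
    (fun o => o.elim x fun i : Fin n => xs i)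
  rw [← hQ_eq] at hbound
  convert hbound using 1
  · rw [← Real.norm_eq_abs, ← Complex.norm_real]
    simp [Fintype.sum_option, sub_eq_neg_add]
  · field_simp
end

section
/- Fix s, α > 0 and let k(x,y) = s² exp(−α‖x−y‖²) on ℝ^d. Then there exist a sequence (x_n)_{n≥1} in ℝ^d and a point x ∈ ℝ^d such that x does NOT belong to the closure of {x_n : n ≥ 1}, yet the kriging variance σ²(x; x₁,…,x_n) converges to 0 as n → ∞. (That is, a process with Gaussian covariance does not possess the No-Empty-Ball property.) -/
open Filter

/-- The kriging variance `σ²(x; x₁,…,x_n) = inf_{λ ∈ ℝⁿ} Qₙ(λ)`. -/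
noncomputable def krigVar {d : ℕ}
    (k : EuclideanSpace ℝ (Fin d) → EuclideanSpace ℝ (Fin d) → ℝ)
    (x : EuclideanSpace ℝ (Fin d)) {n : ℕ}
    (pts : Fin n → EuclideanSpace ℝ (Fin d)) : ℝ :=
  ⨅ lam : Fin n → ℝ, krigQ k x pts lam

/-! On a line `ℝ • e` through the origin the Gaussian kernel has the feature expansion
`exp (-α (a - b)²) = ∑ₜ (2α)ᵗ / t! · φₜ(a) φₜ(b)` with `φₜ(a) = exp (-α a²) aᵗ`, so the kriging
quadratic form is the weighted sum of squares `∑ₜ s² (2α)ᵗ / t! (φₜ(u) - ∑ᵢ λᵢ φₜ(vᵢ))²`.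
Take as design points an enumeration of all grid points `j / m ∈ [0, 1]` and predict at `u = 2`.
Weighting the nodes `j / m` by the Lagrange extrapolation weights `ℓⱼ(2)` (corrected by Gaussian
factors) kills the terms `t ≤ m`; since `∑ⱼ |ℓⱼ(2)| ≤ (6e)ᵐ` grows only geometrically, the other
terms are bounded by the tail of the exponential series of `2α (6e)²`, which tends to `0`. -/

open Finset Real Polynomial
open scoped Nat

theorem hasSum_mul_sq_sub_sum {X ι : Type*} [Fintype ι] {K : X → X → ℝ} {ω : ℕ → ℝ}
    {f : ℕ → X → ℝ} (hK : ∀ a b, HasSum (fun t => ω t * (f t a * f t b)) (K a b))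
    (u : X) (v : ι → X) (lam : ι → ℝ) :
    HasSum (fun t => ω t * (f t u - ∑ i, lam i * f t (v i)) ^ 2)
      (K u u - 2 * ∑ i, lam i * K u (v i) + ∑ i, ∑ j, lam i * lam j * K (v i) (v j)) := by
  have hcross := hasSum_sum (s := univ) fun i _ => (hK u (v i)).mul_left (lam i)
  have hdiag := hasSum_sum (s := univ) fun i _ => hasSum_sum (s := univ) fun j _ =>
    (hK (v i) (v j)).mul_left (lam i * lam j)
  refine (((hK u u).sub (hcross.mul_left 2)).add hdiag).congr_fun fun t => ?_
  have hlin : ∑ i, lam i * (ω t * (f t u * f t (v i))) = ω t * f t u * ∑ i, lam i * f t (v i) := by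
    rw [mul_sum]; exact sum_congr rfl fun i _ => by ring
  have hquad : ∑ i, ∑ j, lam i * lam j * (ω t * (f t (v i) * f t (v j))) =
      ω t * (∑ i, lam i * f t (v i)) ^ 2 := by
    rw [sq, sum_mul_sum, mul_sum]
    exact sum_congr rfl fun i _ => by rw [mul_sum]; exact sum_congr rfl fun j _ => by ring
  rw [hlin, hquad]
  ring

theorem hasSum_exp_neg_mul_sub_sq (α a b : ℝ) :
    HasSum (fun t : ℕ => (2 * α) ^ t / t ! *
        (exp (-α * a ^ 2) * a ^ t * (exp (-α * b ^ 2) * b ^ t)))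
      (exp (-α * (a - b) ^ 2)) := by
  have hexp : HasSum (fun t : ℕ => (2 * α * (a * b)) ^ t / t !) (exp (2 * α * (a * b))) := by
    rw [Real.exp_eq_exp_ℝ]; exact NormedSpace.expSeries_div_hasSum_exp _
  have hsplit : exp (-α * (a - b) ^ 2) =
      exp (2 * α * (a * b)) * (exp (-α * a ^ 2) * exp (-α * b ^ 2)) := by
    rw [← exp_add, ← exp_add]; ring_nf
  rw [hsplit]
  refine (hexp.mul_right _).congr_fun fun t => ?_
  rw [mul_pow, mul_pow]; ring

section KrigVar

variable {d n : ℕ} {k : EuclideanSpace ℝ (Fin d) → EuclideanSpace ℝ (Fin d) → ℝ}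
  {x : EuclideanSpace ℝ (Fin d)} {pts : Fin n → EuclideanSpace ℝ (Fin d)}

theorem krigVar_nonneg (h : ∀ lam, 0 ≤ krigQ k x pts lam) : 0 ≤ krigVar k x pts :=
  le_ciInf h

theorem krigVar_le_krigQ (h : ∀ lam, 0 ≤ krigQ k x pts lam) (lam : Fin n → ℝ) :
    krigVar k x pts ≤ krigQ k x pts lam :=
  ciInf_le ⟨0, by rintro _ ⟨l, rfl⟩; exact h l⟩ lam

end KrigVar

section GaussianLine

variable {d : ℕ} {s α : ℝ} {k : EuclideanSpace ℝ (Fin d) → EuclideanSpace ℝ (Fin d) → ℝ}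
  {e : EuclideanSpace ℝ (Fin d)}

theorem gaussian_smul_smul (hk : ∀ x y, k x y = s ^ 2 * exp (-α * ‖x - y‖ ^ 2)) (he : ‖e‖ = 1)
    (a b : ℝ) : k (a • e) (b • e) = s ^ 2 * exp (-α * (a - b) ^ 2) := by
  rw [hk, ← sub_smul, norm_smul, he, mul_one, Real.norm_eq_abs, sq_abs]

theorem hasSum_krigQ_smul (hk : ∀ x y, k x y = s ^ 2 * exp (-α * ‖x - y‖ ^ 2)) (he : ‖e‖ = 1)
    (u : ℝ) {n : ℕ} (v lam : Fin n → ℝ) :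
    HasSum (fun t : ℕ => s ^ 2 * ((2 * α) ^ t / t !) *
        (exp (-α * u ^ 2) * u ^ t - ∑ i, lam i * (exp (-α * v i ^ 2) * v i ^ t)) ^ 2)
      (krigQ k (u • e) (fun i => v i • e) lam) := by
  unfold krigQ
  refine hasSum_mul_sq_sub_sum (K := fun a b => k (a • e) (b • e))
    (ω := fun t => s ^ 2 * ((2 * α) ^ t / t !)) (f := fun t a => exp (-α * a ^ 2) * a ^ t)
    (fun a b => ?_) u v lam
  rw [gaussian_smul_smul hk he]
  exact ((hasSum_exp_neg_mul_sub_sq α a b).mul_left (s ^ 2)).congr_fun fun t => by ring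

theorem krigQ_smul_nonneg (hk : ∀ x y, k x y = s ^ 2 * exp (-α * ‖x - y‖ ^ 2)) (he : ‖e‖ = 1)
    (hα : 0 ≤ α) (u : ℝ) {n : ℕ} (v lam : Fin n → ℝ) :
    0 ≤ krigQ k (u • e) (fun i => v i • e) lam :=
  (hasSum_krigQ_smul hk he u v lam).nonneg fun t => by positivity

end GaussianLine

theorem Lagrange.sum_eval_basis_mul_pow {F ι : Type*} [Field F] [DecidableEq ι] {s : Finset ι}
    {v : ι → F} (hv : Set.InjOn v s) (x : F) {t : ℕ} (ht : t < s.card) :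
    ∑ i ∈ s, (Lagrange.basis s v i).eval x * v i ^ t = x ^ t := by
  have hdeg : (X ^ t : F[X]).degree < s.card := by
    rw [degree_X_pow]; exact_mod_cast ht
  have h := congrArg (eval x) (Lagrange.eq_interpolate hv hdeg)
  simp only [Lagrange.interpolate_apply, eval_finsetSum, eval_mul, eval_C, eval_pow,
    eval_X] at h
  rw [h]
  exact sum_congr rfl fun i _ => mul_comm _ _

theorem prod_range_abs_sub (j : ℕ) : ∏ i ∈ range j, |(j : ℝ) - i| = j ! := by
  rw [Nat.factorial_eq_prod_range_add_one, Nat.cast_prod, ← prod_range_reflect]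
  refine prod_congr rfl fun i hi => ?_
  have hij := mem_range.1 hi
  push_cast [Nat.cast_sub (by omega : i ≤ j - 1), Nat.cast_sub (by omega : 1 ≤ j)]
  rw [abs_of_pos (by linarith)]
  ring

theorem prod_erase_range_abs_sub {m j : ℕ} (hj : j ≤ m) :
    ∏ i ∈ (range (m + 1)).erase j, |(j : ℝ) - i| = j ! * (m - j)! := by
  induction m, hj using Nat.le_induction with
  | base =>
    rw [range_add_one, erase_insert notMem_range_self, Nat.sub_self, Nat.factorial_zero,
      Nat.cast_one, mul_one, prod_range_abs_sub]
  | succ m hjm ih =>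
    rw [range_add_one, erase_insert_of_ne (by omega), prod_insert (by simp), ih,
      Nat.succ_sub hjm, Nat.factorial_succ]
    push_cast [Nat.cast_sub hjm]
    rw [abs_of_nonpos (by linarith [(Nat.cast_le (α := ℝ)).2 hjm])]
    ring

noncomputable def lagrangeWeight (m : ℕ) (u : ℝ) (j : ℕ) : ℝ :=
  (Lagrange.basis (range (m + 1)) (fun i : ℕ => (i : ℝ) / m) j).eval u

theorem abs_lagrangeWeight_mul_le {m j : ℕ} (hm : 0 < m) (hj : j ≤ m) (u : ℝ) :
    |lagrangeWeight m u j| * (j ! * (m - j)!) ≤ ((|u| + 1) * m) ^ m := by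
  have hm' : (m : ℝ) ≠ 0 := by positivity
  calc |lagrangeWeight m u j| * (j ! * (m - j)!)
      = ∏ i ∈ (range (m + 1)).erase j, |m * u - i| := by
        rw [lagrangeWeight, Lagrange.basis, eval_prod, abs_prod, ← prod_erase_range_abs_sub hj,
          ← prod_mul_distrib]
        refine prod_congr rfl fun i hi => ?_
        have hij : (j : ℝ) - i ≠ 0 := sub_ne_zero.2 (by exact_mod_cast (ne_of_mem_erase hi).symm)
        simp only [Lagrange.basisDivisor, eval_mul, eval_C, eval_sub, eval_X]
        rw [← abs_mul]
        congr 1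
        field_simp
    _ ≤ ∏ i ∈ (range (m + 1)).erase j, (|u| + 1) * m := by
        refine prod_le_prod (fun _ _ => abs_nonneg _) fun i hi => ?_
        have hi' : (i : ℝ) ≤ m := by
          exact_mod_cast Nat.lt_succ_iff.1 (mem_range.1 (mem_of_mem_erase hi))
        calc |m * u - i| ≤ |m * u| + |(i : ℝ)| := abs_sub _ _
          _ ≤ (|u| + 1) * m := by
            rw [abs_mul, Nat.abs_cast, Nat.abs_cast]; nlinarith
    _ = ((|u| + 1) * m) ^ m := by
        rw [prod_const, card_erase_of_mem (mem_range.2 (by omega)), card_range, Nat.add_sub_cancel]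

theorem sum_abs_lagrangeWeight_le {m : ℕ} (hm : 0 < m) (u : ℝ) :
    ∑ j ∈ range (m + 1), |lagrangeWeight m u j| ≤ (2 * exp 1 * (|u| + 1)) ^ m := by
  have hpow : (m : ℝ) ^ m ≤ exp 1 ^ m * m ! := by
    rw [← exp_nat_mul, mul_one, ← div_le_iff₀ (by positivity)]
    exact pow_div_factorial_le_exp _ (by positivity) m
  have hterm : ∀ j ∈ range (m + 1),
      |lagrangeWeight m u j| ≤ (exp 1 * (|u| + 1)) ^ m * m.choose j := by
    intro j hj
    have hj := Nat.lt_succ_iff.1 (mem_range.1 hj)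
    have hfac : (0 : ℝ) < j ! * (m - j)! := by positivity
    refine le_of_mul_le_mul_right ?_ hfac
    calc |lagrangeWeight m u j| * (j ! * (m - j)!) ≤ ((|u| + 1) * m) ^ m :=
          abs_lagrangeWeight_mul_le hm hj u
      _ ≤ (|u| + 1) ^ m * (exp 1 ^ m * m !) := by
          rw [mul_pow]; exact mul_le_mul_of_nonneg_left hpow (by positivity)
      _ = (exp 1 * (|u| + 1)) ^ m * m.choose j * (j ! * (m - j)!) := by
          rw [← Nat.choose_mul_factorial_mul_factorial hj, mul_pow]; push_cast; ring
  calc ∑ j ∈ range (m + 1), |lagrangeWeight m u j|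
      ≤ ∑ j ∈ range (m + 1), (exp 1 * (|u| + 1)) ^ m * m.choose j := sum_le_sum hterm
    _ = (2 * exp 1 * (|u| + 1)) ^ m := by
        rw [← mul_sum, ← Nat.cast_sum, Nat.sum_range_choose, mul_assoc, mul_pow 2]; push_cast; ring

noncomputable def extrapolationError (m : ℕ) (u : ℝ) (t : ℕ) : ℝ :=
  u ^ t - ∑ j ∈ range (m + 1), lagrangeWeight m u j * ((j : ℝ) / m) ^ t

theorem extrapolationError_eq_zero {m t : ℕ} (hm : 0 < m) (ht : t ≤ m) (u : ℝ) :
    extrapolationError m u t = 0 := by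
  have hinj : Set.InjOn (fun i : ℕ => (i : ℝ) / m) (range (m + 1)) := fun i _ j _ h => by
    simpa [div_left_inj' (show (m : ℝ) ≠ 0 by positivity)] using h
  rw [extrapolationError, sub_eq_zero, eq_comm]
  exact Lagrange.sum_eval_basis_mul_pow hinj u (by rw [card_range]; omega)

theorem abs_extrapolationError_le {m t : ℕ} (hm : 0 < m) (ht : m ≤ t) (u : ℝ) :
    |extrapolationError m u t| ≤ 2 * (2 * exp 1 * (|u| + 1)) ^ t := by
  set B := 2 * exp 1 * (|u| + 1)
  have hB : 1 ≤ B ∧ |u| ≤ B := by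
    have := add_one_le_exp 1
    constructor <;> nlinarith [abs_nonneg u]
  have hnode : ∀ j ∈ range (m + 1), |lagrangeWeight m u j * ((j : ℝ) / m) ^ t| ≤
      |lagrangeWeight m u j| := fun j hj => by
    rw [abs_mul, abs_pow]
    refine mul_le_of_le_one_right (abs_nonneg _) (pow_le_one₀ (abs_nonneg _) ?_)
    rw [abs_div, Nat.abs_cast, Nat.abs_cast]
    exact div_le_one_of_le₀ (by exact_mod_cast Nat.lt_succ_iff.1 (mem_range.1 hj)) (by positivity)
  calc |extrapolationError m u t|
      ≤ |u ^ t| + |∑ j ∈ range (m + 1), lagrangeWeight m u j * ((j : ℝ) / m) ^ t| := abs_sub _ _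
    _ ≤ B ^ t + B ^ m := by
        gcongr
        · rw [abs_pow]; exact pow_le_pow_left₀ (abs_nonneg _) hB.2 t
        · exact (abs_sum_le_sum_abs _ _).trans ((sum_le_sum hnode).trans
            (sum_abs_lagrangeWeight_le hm u))
    _ ≤ 2 * B ^ t := by linarith [pow_le_pow_right₀ hB.1 ht]

theorem sq_exp_mul_extrapolationError_le {α : ℝ} (hα : 0 ≤ α) {m t : ℕ} (hm : 0 < m)
    (ht : m ≤ t) (u : ℝ) :
    (exp (-α * u ^ 2) * extrapolationError m u t) ^ 2 ≤
      4 * ((2 * exp 1 * (|u| + 1)) ^ 2) ^ t := by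
  have hG : exp (-α * u ^ 2) ^ 2 ≤ 1 :=
    pow_le_one₀ (exp_nonneg _) (exp_le_one_iff.2 (by nlinarith [sq_nonneg u]))
  have hE := sq_le_sq.2 ((abs_extrapolationError_le hm ht u).trans (le_abs_self _))
  calc (exp (-α * u ^ 2) * extrapolationError m u t) ^ 2
      ≤ 1 * (2 * (2 * exp 1 * (|u| + 1)) ^ t) ^ 2 := by
        rw [mul_pow]; exact mul_le_mul hG hE (sq_nonneg _) zero_le_one
    _ = 4 * ((2 * exp 1 * (|u| + 1)) ^ 2) ^ t := by rw [pow_right_comm]; ring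

theorem sum_fin_sum_ite_mul {ι : Type*} {n : ℕ} {s : Finset ι} {σ : ι → ℕ}
    (hσ : ∀ j ∈ s, σ j < n) (μ : ι → ℝ) (g : ℕ → ℝ) :
    ∑ i : Fin n, (∑ j ∈ s, if σ j = i then μ j else 0) * g i = ∑ j ∈ s, μ j * g (σ j) := by
  simp only [sum_mul, ite_mul, zero_mul]
  rw [Fin.sum_univ_eq_sum_range (fun i => ∑ j ∈ s, if σ j = i then μ j * g i else 0), sum_comm]
  exact sum_congr rfl fun j hj => by rw [sum_ite_eq, if_pos (mem_range.2 (hσ j hj))]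

noncomputable def gaussLagrangeWeights (α : ℝ) (m : ℕ) (u : ℝ) (σ : ℕ → ℕ) (n : ℕ) :
    Fin n → ℝ := fun i =>
  ∑ j ∈ range (m + 1),
    if σ j = i then exp (α * ((j : ℝ) / m) ^ 2 - α * u ^ 2) * lagrangeWeight m u j else 0

theorem residual_gaussLagrangeWeights {α u : ℝ} {q : ℕ → ℝ} {m n : ℕ} {σ : ℕ → ℕ}
    (hσ : ∀ j ≤ m, σ j < n) (hq : ∀ j ≤ m, q (σ j) = j / m) (t : ℕ) :
    exp (-α * u ^ 2) * u ^ t - ∑ i, gaussLagrangeWeights α m u σ n i *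
        (exp (-α * q i ^ 2) * q i ^ t) =
      exp (-α * u ^ 2) * extrapolationError m u t := by
  simp only [gaussLagrangeWeights]
  rw [sum_fin_sum_ite_mul (fun j hj => hσ j (mem_range_succ_iff.1 hj)) _
    (fun i => exp (-α * q i ^ 2) * q i ^ t), extrapolationError, mul_sub, mul_sum]
  congr 1
  refine sum_congr rfl fun j hj => ?_
  rw [hq j (mem_range_succ_iff.1 hj)]
  have hexp : exp (α * ((j : ℝ) / m) ^ 2 - α * u ^ 2) * exp (-α * ((j : ℝ) / m) ^ 2) =
      exp (-α * u ^ 2) := by rw [← exp_add]; ring_nf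
  linear_combination (lagrangeWeight m u j * ((j : ℝ) / m) ^ t) * hexp

theorem krigVar_smul_le_tail {d : ℕ} {s α : ℝ}
    {k : EuclideanSpace ℝ (Fin d) → EuclideanSpace ℝ (Fin d) → ℝ} {e : EuclideanSpace ℝ (Fin d)}
    (hk : ∀ x y, k x y = s ^ 2 * exp (-α * ‖x - y‖ ^ 2)) (he : ‖e‖ = 1) (hα : 0 ≤ α) (u : ℝ)
    {q : ℕ → ℝ} {m n : ℕ} (hm : 0 < m) {σ : ℕ → ℕ} (hσ : ∀ j ≤ m, σ j < n)
    (hq : ∀ j ≤ m, q (σ j) = j / m) :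
    krigVar k (u • e) (fun i : Fin n => q i • e) ≤
      4 * s ^ 2 * ∑' t, (2 * α * (2 * exp 1 * (|u| + 1)) ^ 2) ^ (t + (m + 1)) /
        (t + (m + 1))! := by
  set B := 2 * exp 1 * (|u| + 1)
  set term : ℕ → ℝ := fun t =>
    s ^ 2 * ((2 * α) ^ t / t !) * (exp (-α * u ^ 2) * extrapolationError m u t) ^ 2
  have hQ : HasSum term
      (krigQ k (u • e) (fun i : Fin n => q i • e) (gaussLagrangeWeights α m u σ n)) := by
    simpa only [residual_gaussLagrangeWeights hσ hq] using
      hasSum_krigQ_smul hk he u (fun i : Fin n => q i) (gaussLagrangeWeights α m u σ n)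
  have htail : ∀ t, term (t + (m + 1)) ≤
      4 * s ^ 2 * ((2 * α * B ^ 2) ^ (t + (m + 1)) / (t + (m + 1))!) := fun t =>
    calc term (t + (m + 1))
        ≤ s ^ 2 * ((2 * α) ^ (t + (m + 1)) / (t + (m + 1))!) * (4 * (B ^ 2) ^ (t + (m + 1))) :=
          mul_le_mul_of_nonneg_left (sq_exp_mul_extrapolationError_le hα hm (by omega) u)
            (by positivity)
      _ = 4 * s ^ 2 * ((2 * α * B ^ 2) ^ (t + (m + 1)) / (t + (m + 1))!) := by
          rw [mul_pow (2 * α)]; ring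
  calc krigVar k (u • e) (fun i : Fin n => q i • e)
      ≤ krigQ k (u • e) (fun i : Fin n => q i • e) (gaussLagrangeWeights α m u σ n) :=
        krigVar_le_krigQ (krigQ_smul_nonneg hk he hα u (fun i : Fin n => q i)) _
    _ = ∑' t, term (t + (m + 1)) := by
        rw [← hQ.tsum_eq, ← hQ.summable.sum_add_tsum_nat_add (m + 1), sum_eq_zero, zero_add]
        intro t ht
        simp only [term, extrapolationError_eq_zero hm (Nat.lt_succ_iff.1 (mem_range.1 ht)),
          mul_zero, zero_pow two_ne_zero]
    _ ≤ ∑' t, 4 * s ^ 2 * ((2 * α * B ^ 2) ^ (t + (m + 1)) / (t + (m + 1))!) :=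
        hQ.summable.comp_injective (add_left_injective _) |>.tsum_le_tsum htail
          (((summable_nat_add_iff (m + 1)).2 (summable_pow_div_factorial _)).mul_left _)
    _ = _ := tsum_mul_left

theorem tendsto_zero_of_eventually_le {ι κ : Type*} {l : Filter ι} {l' : Filter κ} [l'.NeBot]
    {a : ι → ℝ} {b : κ → ℝ} (hb : Tendsto b l' (nhds 0)) (ha : ∀ i, 0 ≤ a i)
    (hab : ∀ᶠ m in l', ∀ᶠ i in l, a i ≤ b m) : Tendsto a l (nhds 0) := by
  refine tendsto_order.2 ⟨fun ε hε => Eventually.of_forall fun i => hε.trans_le (ha i),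
    fun ε hε => ?_⟩
  obtain ⟨m, hm, hbm⟩ := (hab.and (hb.eventually (gt_mem_nhds hε))).exists
  exact hm.mono fun i hi => hi.trans_lt hbm

noncomputable def gridPoint (i : ℕ) : ℝ := min ((i.unpair.2 : ℝ) / i.unpair.1) 1

theorem gridPoint_pair {m j : ℕ} (hj : j ≤ m) : gridPoint (Nat.pair m j) = j / m := by
  rw [gridPoint, Nat.unpair_pair,
    min_eq_left (div_le_one_of_le₀ (by exact_mod_cast hj) (Nat.cast_nonneg _))]

theorem abs_gridPoint_le_one (i : ℕ) : |gridPoint i| ≤ 1 := by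
  have h0 : (0 : ℝ) ≤ (i.unpair.2 : ℝ) / i.unpair.1 := by positivity
  exact abs_le.2 ⟨le_min (by linarith) (by norm_num), min_le_right _ _⟩

theorem gaussian_kernel_not_NEB_general {d : ℕ} (hd : 0 < d)
    (s α : ℝ) (hα : 0 < α)
    (k : EuclideanSpace ℝ (Fin d) → EuclideanSpace ℝ (Fin d) → ℝ)
    (hk : ∀ x y, k x y = s ^ 2 * Real.exp (-α * ‖x - y‖ ^ 2)) :
    ∃ (xs : ℕ → EuclideanSpace ℝ (Fin d)) (x : EuclideanSpace ℝ (Fin d)),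
      x ∉ closure (Set.range xs) ∧
      Tendsto (fun n : ℕ => krigVar k x (fun i : Fin n => xs i)) atTop (nhds 0) := by
  set e : EuclideanSpace ℝ (Fin d) := EuclideanSpace.single ⟨0, hd⟩ 1
  have he : ‖e‖ = 1 := by simp [e]
  refine ⟨fun i => gridPoint i • e, (2 : ℝ) • e, fun hx => ?_, ?_⟩
  · have hball : closure (Set.range fun i => gridPoint i • e) ⊆ Metric.closedBall 0 1 :=
      closure_minimal (Set.range_subset_iff.2 fun i => by
        simpa [norm_smul, he] using abs_gridPoint_le_one i) Metric.isClosed_closedBall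
    have h2 := hball hx
    norm_num [norm_smul, he] at h2
  · set B := 2 * exp 1 * (|(2 : ℝ)| + 1)
    refine tendsto_zero_of_eventually_le (l' := atTop)
      (b := fun m : ℕ => 4 * s ^ 2 * ∑' t, (2 * α * B ^ 2) ^ (t + (m + 1)) / (t + (m + 1))!) ?_
      (fun n => krigVar_nonneg (krigQ_smul_nonneg hk he hα.le 2 (fun i : Fin n => gridPoint i)))
      ?_
    · have h := ((tendsto_sum_nat_add fun t => (2 * α * B ^ 2) ^ t / t !).comp
        (tendsto_add_atTop_nat 1)).const_mul (4 * s ^ 2)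
      rw [mul_zero] at h
      exact h
    · filter_upwards [eventually_gt_atTop 0] with m hm
      filter_upwards [eventually_ge_atTop ((m + 1) ^ 2)] with n hn
      exact krigVar_smul_le_tail hk he hα.le 2 hm
        (fun j hj => (Nat.pair_lt_max_add_one_sq m j).trans_le (by rwa [max_eq_left hj]))
        fun j hj => gridPoint_pair hj

/-- A process with Gaussian covariance `k(x,y) = s² exp(−α‖x−y‖²)` does not have the
No-Empty-Ball property: there are a sequence `(xₙ)` and a point `x` not adherent to
`{xₙ : n ≥ 1}` such that the kriging variance at `x` tends to `0`. -/
theorem gaussian_kernel_not_NEB {d : ℕ} (hd : 0 < d)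
    (s α : ℝ) (hs : 0 < s) (hα : 0 < α)
    (k : EuclideanSpace ℝ (Fin d) → EuclideanSpace ℝ (Fin d) → ℝ)
    (hk : ∀ x y, k x y = s ^ 2 * Real.exp (-α * ‖x - y‖ ^ 2)) :
    ∃ (xs : ℕ → EuclideanSpace ℝ (Fin d)) (x : EuclideanSpace ℝ (Fin d)),
      x ∉ closure (Set.range xs) ∧
      Tendsto (fun n : ℕ => krigVar k x (fun i : Fin n => xs i)) atTop (nhds 0) :=
  gaussian_kernel_not_NEB_general hd s α hα k hk
end
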